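/- Let a and μ be nonnegative integers with (p−1)/2 < a ≤ p−1, and let v := v_p(2μ+1) be the p-adic valuation of 2μ+1 (so v = v_p(μ + 1/2)). Then the element A_{1/2}(a+μp)/φ(A_{1/2}(μ)) of Q lies in [p^{1+v}]_q·R. -/

import Mathlib

/- Setting (following Dwork-type q-congruences / q-hypergeometric papers):
`p` is an odd prime, `R = ℤ_p[[q−1]]` is implemented as `PowerSeries ℤ_[p]`, the power-series
variable `PowerSeries.X` standing for `q − 1`. -/

noncomputable section
open PowerSeries
namespace QDwork

variable (p : ℕ) [Fact p.Prime]

/-- `R = ℤ_p[[q−1]]`. -/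
abbrev R : Type := PowerSeries ℤ_[p]

/-- `q = 1 + (q−1) ∈ R`. -/
def qq : R p := 1 + PowerSeries.X

/-- `q^a = Σ_{i≥0} binom(a,i)(q−1)^i ∈ R` for `a ∈ ℤ_p`, using the p-adically interpolated
binomial coefficients `Ring.choose` (`ℤ_p` is a binomial ring). -/
def qpow (a : ℤ_[p]) : R p := PowerSeries.mk fun i => Ring.choose a i

/-- The q-number `[a]_q = (q^a−1)/(q−1) = Σ_{i≥1} binom(a,i)(q−1)^{i−1} ∈ R` for `a ∈ ℤ_p`. -/
def qnum (a : ℤ_[p]) : R p := PowerSeries.mk fun i => Ring.choose a (i + 1)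

/-- The q-number `[n]_q = 1 + q + ⋯ + q^{n−1} ∈ R` of a natural number `n`. -/
def qnat (n : ℕ) : R p := ∑ i ∈ Finset.range n, qq p ^ i

/-- `1/2 ∈ ℤ_p` (recall `p` is odd, so `2` is a unit of `ℤ_p`). -/
def half : ℤ_[p] := Ring.inverse 2

/-- The Frobenius endomorphism `φ` of `R = ℤ_p[[q−1]]`: the ring endomorphism fixing `ℤ_p`
with `φ(q) = q^p`, i.e. the substitution `f(q−1) ↦ f(q^p−1)` (legitimate since `q^p−1` has
zero constant term), described here through its coefficients. -/
def phiR (f : R p) : R p :=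
  PowerSeries.mk fun n => ∑ i ∈ Finset.range (n + 1),
    PowerSeries.coeff i f * PowerSeries.coeff n ((qq p ^ p - 1) ^ i)

/-- `Q = Frac(R)`. -/
abbrev Q : Type := FractionRing (R p)

/-- The canonical injection `R → Q`. -/
def ι : R p →+* Q p := algebraMap (R p) (Q p)

/-- `q ∈ Q`. -/
def qQ : Q p := ι p (qq p)

/-- The extension of the Frobenius `φ` to `Q = Frac(R)` (computed via a choice of a fraction
representation `x = r/s`, `φ(x) = φ(r)/φ(s)`). -/
def phiQ (x : Q p) : Q p :=
  ι p (phiR p (IsLocalization.sec (nonZeroDivisors (R p)) x).1) /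
    ι p (phiR p ((IsLocalization.sec (nonZeroDivisors (R p)) x).2 : R p))

/-- `C_θ(n) = ∏_{ν=0}^{n−1} [θ+ν]_q ∈ R`. -/
def Cq (θ : ℤ_[p]) (n : ℕ) : R p := ∏ ν ∈ Finset.range n, qnum p (θ + (ν : ℤ_[p]))

/-- `A_{1/2}(n) = C_{1/2}(n)/C_1(n) ∈ Q`. -/
def Ahalf (n : ℕ) : Q p := ι p (Cq p (half p) n) / ι p (Cq p 1 n)

/-! The Frobenius `φ` is substitution of `q^p − 1 = [p]_q (q − 1)` for `q − 1`, so
`φ(q^θ) = q^{pθ}` (both sides are continuous in `θ` and agree on the dense set `ℕ`),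
whence `[pθ]_q = [p]_q φ([θ]_q)` and, iterating, `[p^k]_q ∣ [p^k θ]_q`.

If `θ + j₀ = pθ` with `j₀ < p`, then among the `θ + ν` with `ν` in a block
`pn, …, pn + p − 1` only `θ + pn + j₀ = p(θ + n)` is a non-unit of `ℤ_p`, so the other
factors `[θ + ν]_q` are units of `R`. Hence `C_θ(pμ) ∼ [p]_q^μ φ(C_θ(μ))`, and a partial
block of length `a` contributes the extra factor `[p(θ + μ)]_q` exactly when `j₀ < a`.
For `θ = 1/2` we have `j₀ = (p−1)/2 < a`, for `θ = 1` we have `j₀ = p − 1 ≥ a`, so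
`A_{1/2}(a + μp)/φ(A_{1/2}(μ))` is a unit multiple of `[p(μ + 1/2)]_q = [p^{1+v} · m/2]_q`,
where `2μ + 1 = p^v m`. -/

open IsLocalRing

lemma qnat_mul_X (n : ℕ) : qnat p n * X = qq p ^ n - 1 := by
  simpa [qnat, qq] using geom_sum_mul (qq p) n

lemma constantCoeff_qnat (n : ℕ) : constantCoeff (qnat p n) = n := by
  simp [qnat, qq]

lemma qnat_ne_zero {n : ℕ} (hn : n ≠ 0) : qnat p n ≠ 0 := fun h => by
  have := constantCoeff_qnat p n
  rw [h, map_zero] at this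
  exact hn (by exact_mod_cast this.symm)

lemma qpow_natCast (n : ℕ) : qpow p n = qq p ^ n := by
  rw [qq, ← binomialSeries_nat (R := ℤ_[p])]
  ext k
  simp only [qpow, coeff_mk, binomialSeries_coeff, smul_eq_mul, mul_one]

lemma constantCoeff_qnum (θ : ℤ_[p]) : constantCoeff (qnum p θ) = θ := by
  rw [← coeff_zero_eq_constantCoeff_apply, qnum, coeff_mk, zero_add, Ring.choose_one_right]

lemma qnum_mul_X (θ : ℤ_[p]) : qnum p θ * X = qpow p θ - 1 := by
  ext (_ | n)
  · simp [qpow]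
  · simp [qnum, qpow, coeff_one]

lemma qnum_natCast (n : ℕ) : qnum p n = qnat p n :=
  mul_right_cancel₀ X_ne_zero (by rw [qnum_mul_X, qnat_mul_X, qpow_natCast])

lemma qq_pow_sub_one : qq p ^ p - 1 = qnat p p * X := (qnat_mul_X p p).symm

lemma hasSubst_qq_pow_sub_one : HasSubst (qq p ^ p - 1) :=
  HasSubst.of_constantCoeff_zero' (by simp [qq_pow_sub_one])

lemma phiR_eq_subst (f : R p) : phiR p f = f.subst (qq p ^ p - 1) := by
  ext n
  rw [coeff_subst' (hasSubst_qq_pow_sub_one p), phiR, coeff_mk,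
    finsum_eq_sum_of_support_subset (s := Finset.range (n + 1))]
  · simp only [smul_eq_mul]
  intro d hd
  simp only [Function.mem_support, Finset.coe_range, Set.mem_Iio] at hd ⊢
  by_contra h
  exact hd (by rw [qq_pow_sub_one, mul_pow, coeff_mul_X_pow', if_neg (by omega), smul_zero])

def frobenius : R p →+* R p :=
  (substAlgHom (hasSubst_qq_pow_sub_one p)).toRingHom.copy (phiR p)
    (funext fun f => (phiR_eq_subst p f).trans (congrFun (coe_substAlgHom _).symm f))

lemma coeff_frobenius (f : R p) (n : ℕ) :
    coeff n (frobenius p f) =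
      ∑ i ∈ Finset.range (n + 1), coeff i f * coeff n ((qq p ^ p - 1) ^ i) :=
  (coeff_mk _ _ : coeff n (phiR p f) = _)

lemma frobenius_X : frobenius p X = qq p ^ p - 1 :=
  (phiR_eq_subst p X).trans (subst_X (hasSubst_qq_pow_sub_one p))

lemma frobenius_qq : frobenius p (qq p) = qq p ^ p := by
  rw [qq, map_add, map_one, frobenius_X, qq]
  ring

lemma constantCoeff_frobenius (f : R p) : constantCoeff (frobenius p f) = constantCoeff f := by
  rw [← coeff_zero_eq_constantCoeff_apply, ← coeff_zero_eq_constantCoeff_apply, coeff_frobenius]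
  simp

lemma frobenius_ne_zero {f : R p} (hf : f ≠ 0) : frobenius p f ≠ 0 := by
  rw [← X_pow_order_mul_divXPowOrder (f := f), map_mul, map_pow, frobenius_X, qq_pow_sub_one]
  refine mul_ne_zero (pow_ne_zero _ (mul_ne_zero (qnat_ne_zero p (Fact.out : p.Prime).ne_zero)
    X_ne_zero)) fun h => hf ?_
  rw [← constantCoeff_divXPowOrder_eq_zero_iff, ← constantCoeff_frobenius, h, map_zero]

lemma frobenius_qpow (θ : ℤ_[p]) : frobenius p (qpow p θ) = qpow p (p * θ) := by
  ext n
  suffices (fun θ => coeff n (frobenius p (qpow p θ))) = fun θ => coeff n (qpow p (p * θ)) from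
    congrFun this θ
  refine PadicInt.denseRange_natCast.equalizer ?_ ?_ (funext fun m => ?_)
  · simp only [coeff_frobenius, qpow, coeff_mk]
    exact continuous_finsetSum _ fun i _ => (PadicInt.continuous_choose i).mul continuous_const
  · simp only [qpow, coeff_mk]
    exact (PadicInt.continuous_choose n).comp (continuous_const_mul _)
  · simp only [Function.comp_apply, qpow_natCast, map_pow, frobenius_qq, ← pow_mul,
      ← Nat.cast_mul]

lemma qnum_natCast_mul (θ : ℤ_[p]) : qnum p (p * θ) = qnat p p * frobenius p (qnum p θ) := by
  apply mul_right_cancel₀ (X_ne_zero (R := ℤ_[p]))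
  calc qnum p (p * θ) * X = frobenius p (qpow p θ - 1) := by
        rw [qnum_mul_X, map_sub, map_one, frobenius_qpow]
    _ = frobenius p (qnum p θ) * (qnat p p * X) := by
        rw [← qnum_mul_X, map_mul, frobenius_X, qq_pow_sub_one]
    _ = qnat p p * frobenius p (qnum p θ) * X := by ring

lemma qnat_mul (n : ℕ) : qnat p (p * n) = qnat p p * frobenius p (qnat p n) := by
  have h := qnum_natCast_mul p n
  rwa [← Nat.cast_mul, qnum_natCast, qnum_natCast] at h

lemma qnat_pow_dvd_qnum (k : ℕ) (θ : ℤ_[p]) : qnat p (p ^ k) ∣ qnum p (p ^ k * θ) := by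
  induction k with
  | zero => simp [qnat]
  | succ k ih =>
    rw [pow_succ' (p : ℤ_[p]), mul_assoc, qnum_natCast_mul, pow_succ' p, qnat_mul]
    exact mul_dvd_mul_left _ (map_dvd _ ih)

lemma ι_injective : Function.Injective (ι p) := IsFractionRing.injective (R p) (Q p)

lemma ι_ne_zero {f : R p} (hf : f ≠ 0) : ι p f ≠ 0 :=
  (map_ne_zero_iff _ (ι_injective p)).mpr hf

lemma phiQ_div (f : R p) {g : R p} (hg : g ≠ 0) :
    phiQ p (ι p f / ι p g) = ι p (frobenius p f) / ι p (frobenius p g) := by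
  set r := (IsLocalization.sec (nonZeroDivisors (R p)) (ι p f / ι p g)).1
  set s := (IsLocalization.sec (nonZeroDivisors (R p)) (ι p f / ι p g)).2
  have hs : (s : R p) ≠ 0 := nonZeroDivisors.ne_zero s.2
  have hcross : f * s = r * g := ι_injective p <| by
    have hspec : ι p f / ι p g * ι p s = ι p r :=
      IsLocalization.sec_spec (nonZeroDivisors (R p)) (ι p f / ι p g)
    rw [map_mul, map_mul, ← hspec]
    field_simp [ι_ne_zero p hg]
  rw [phiQ]
  change ι p (frobenius p r) / ι p (frobenius p s) = _
  rw [div_eq_div_iff (ι_ne_zero p (frobenius_ne_zero p hs))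
    (ι_ne_zero p (frobenius_ne_zero p hg))]
  simp only [← map_mul]
  rw [← hcross]

lemma two_mul_half (hp : p ≠ 2) : 2 * half p = 1 := by
  refine Ring.mul_inverse_cancel _ (PadicInt.isUnit_iff.mpr ?_)
  exact_mod_cast PadicInt.norm_natCast_eq_one_iff.mpr
    ((Nat.coprime_primes Fact.out Nat.prime_two).mpr hp)

lemma isUnit_intCast_of_natAbs_lt {k : ℤ} (h0 : k ≠ 0) (hk : k.natAbs < p) :
    IsUnit (k : ℤ_[p]) := by
  by_contra h
  rw [PadicInt.not_isUnit_iff, PadicInt.norm_int_lt_one_iff_dvd] at h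
  exact h0 (Int.eq_zero_of_dvd_of_natAbs_lt_natAbs h (by simpa using hk))

lemma qnum_ne_zero {θ : ℤ_[p]} (h : θ ≠ 0) : qnum p θ ≠ 0 :=
  fun h0 => h (by rw [← constantCoeff_qnum p θ, h0, map_zero])

lemma isUnit_qnum {θ : ℤ_[p]} (h : IsUnit θ) : IsUnit (qnum p θ) := by
  rwa [isUnit_iff_constantCoeff, constantCoeff_qnum]

lemma Cq_ne_zero {θ : ℤ_[p]} (h : ∀ ν : ℕ, θ + ν ≠ 0) (n : ℕ) : Cq p θ n ≠ 0 :=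
  Finset.prod_ne_zero_iff.mpr fun ν _ => qnum_ne_zero p (h ν)

lemma Cq_succ (θ : ℤ_[p]) (n : ℕ) : Cq p θ (n + 1) = Cq p θ n * qnum p (θ + n) :=
  Finset.prod_range_succ _ _

lemma Cq_add (θ : ℤ_[p]) (m n : ℕ) :
    Cq p θ (m + n) =
      Cq p θ m * ∏ j ∈ Finset.range n, qnum p (θ + ((m + j : ℕ) : ℤ_[p])) :=
  Finset.prod_range_add _ _ _

section Blocks

variable {p} {θ : ℤ_[p]} {j₀ : ℕ}

lemma isUnit_add_natCast (hθ : θ + j₀ = p * θ) (hj₀ : j₀ < p) {j : ℕ} (hj : j < p)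
    (hne : j ≠ j₀) (n : ℕ) : IsUnit (θ + ((p * n + j : ℕ) : ℤ_[p])) := by
  have hsplit :
      θ + ((p * n + j : ℕ) : ℤ_[p]) = p * (θ + n) + ((j - j₀ : ℤ) : ℤ_[p]) := by
    push_cast
    linear_combination hθ
  have hmem : (p : ℤ_[p]) * (θ + n) ∈ maximalIdeal ℤ_[p] :=
    Ideal.mul_mem_right _ _ ((mem_maximalIdeal _).mpr PadicInt.p_nonunit)
  rw [hsplit, ← notMem_maximalIdeal, Ideal.add_mem_iff_right _ hmem, notMem_maximalIdeal]
  exact isUnit_intCast_of_natAbs_lt p (by omega) (by omega)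

lemma isUnit_prod_qnum (hθ : θ + j₀ = p * θ) (hj₀ : j₀ < p) {s : Finset ℕ}
    (hs : ∀ j ∈ s, j < p ∧ j ≠ j₀) (n : ℕ) :
    IsUnit (∏ j ∈ s, qnum p (θ + ((p * n + j : ℕ) : ℤ_[p]))) :=
  IsUnit.prod_iff.mpr fun j hj =>
    isUnit_qnum p (isUnit_add_natCast hθ hj₀ (hs j hj).1 (hs j hj).2 n)

lemma associated_prod_qnum (hθ : θ + j₀ = p * θ) {a : ℕ} (hj₀a : j₀ < a) (ha : a ≤ p)
    (n : ℕ) :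
    Associated (qnum p (p * (θ + n)))
      (∏ j ∈ Finset.range a, qnum p (θ + ((p * n + j : ℕ) : ℤ_[p]))) := by
  have hmid : θ + ((p * n + j₀ : ℕ) : ℤ_[p]) = p * (θ + n) := by
    push_cast
    linear_combination hθ
  rw [← Finset.mul_prod_erase _ _ (Finset.mem_range.mpr hj₀a), hmid]
  refine associated_mul_unit_right _ _ (isUnit_prod_qnum hθ (by omega) (fun j hj => ?_) n)
  rw [Finset.mem_erase, Finset.mem_range] at hj
  omega

lemma Cq_mul_associated (hθ : θ + j₀ = p * θ) (hj₀ : j₀ < p) (μ : ℕ) :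
    Associated (qnat p p ^ μ * frobenius p (Cq p θ μ)) (Cq p θ (p * μ)) := by
  induction μ with
  | zero => simp [Cq]
  | succ μ ih =>
    rw [mul_add_one, Cq_add p θ (p * μ)]
    refine (Associated.of_eq ?_).trans (ih.mul_mul (associated_prod_qnum hθ hj₀ le_rfl μ))
    rw [Cq_succ, map_mul, qnum_natCast_mul]
    ring

lemma Cq_add_associated_of_le (hθ : θ + j₀ = p * θ) (hj₀ : j₀ < p) {a : ℕ}
    (ha : a ≤ j₀) (μ : ℕ) :
    Associated (qnat p p ^ μ * frobenius p (Cq p θ μ)) (Cq p θ (p * μ + a)) := by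
  rw [Cq_add]
  refine (Cq_mul_associated hθ hj₀ μ).trans
    (associated_mul_unit_right _ _ (isUnit_prod_qnum hθ hj₀ (fun j hj => ?_) μ))
  rw [Finset.mem_range] at hj
  omega

lemma Cq_add_associated_of_lt (hθ : θ + j₀ = p * θ) {a : ℕ} (hj₀a : j₀ < a)
    (ha : a ≤ p) (μ : ℕ) :
    Associated (qnat p p ^ μ * frobenius p (Cq p θ μ) * qnum p (p * (θ + μ)))
      (Cq p θ (p * μ + a)) := by
  rw [Cq_add]
  exact (Cq_mul_associated hθ (by omega) μ).mul_mul (associated_prod_qnum hθ hj₀a ha μ)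

end Blocks

lemma half_add_eq_mul_half (hp : p ≠ 2) : half p + ((p - 1) / 2 : ℕ) = p * half p := by
  have hodd : p = 2 * ((p - 1) / 2) + 1 := by
    have := (Nat.Prime.eq_two_or_odd (Fact.out : p.Prime)).resolve_left hp
    omega
  have hodd' : (p : ℤ_[p]) = 2 * ((p - 1) / 2 : ℕ) + 1 := by exact_mod_cast hodd
  linear_combination (-half p) * hodd' - (((p - 1) / 2 : ℕ) : ℤ_[p]) * two_mul_half p hp

lemma one_add_eq_mul_one : (1 : ℤ_[p]) + ((p - 1 : ℕ) : ℤ_[p]) = p * 1 := by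
  rw [Nat.cast_sub (Fact.out : p.Prime).one_le]
  ring

lemma half_add_natCast_ne_zero (hp : p ≠ 2) (ν : ℕ) : half p + ν ≠ 0 := fun h => by
  have h2 : ((2 * ν + 1 : ℕ) : ℤ_[p]) = 2 * (half p + ν) := by
    push_cast
    linear_combination -two_mul_half p hp
  rw [h, mul_zero] at h2
  exact (Nat.cast_ne_zero.mpr (by omega)) h2

lemma one_add_natCast_ne_zero (ν : ℕ) : (1 : ℤ_[p]) + ν ≠ 0 := by
  exact_mod_cast (by omega : 1 + ν ≠ 0)

lemma qnat_dvd_qnum_mul_half_add (hp : p ≠ 2) (μ : ℕ) :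
    qnat p (p ^ (1 + padicValNat p (2 * μ + 1))) ∣ qnum p (p * (half p + μ)) := by
  obtain ⟨m, hm⟩ := pow_padicValNat_dvd (p := p) (n := 2 * μ + 1)
  have hm' : ((2 * μ + 1 : ℕ) : ℤ_[p]) = (p : ℤ_[p]) ^ padicValNat p (2 * μ + 1) * m := by
    exact_mod_cast hm
  have hθ : (p : ℤ_[p]) * (half p + μ) =
      (p : ℤ_[p]) ^ (1 + padicValNat p (2 * μ + 1)) * (m * half p) := by
    push_cast at hm'
    linear_combination (p * half p) * hm' - (p * μ : ℤ_[p]) * two_mul_half p hp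
  rw [hθ]
  exact qnat_pow_dvd_qnum p _ _

/-- For `(p−1)/2 < a ≤ p−1` and `v = v_p(2μ+1) = v_p(μ+1/2)`, the element
`A_{1/2}(a+μp)/φ(A_{1/2}(μ))` of `Q` lies in `[p^{1+v}]_q·R`. -/
theorem dwork_corollary_2_i (hp : p ≠ 2) (a μ : ℕ)
    (ha1 : (p - 1) / 2 < a) (ha2 : a ≤ p - 1) :
    ∃ r : R p, Ahalf p (a + μ * p) / phiQ p (Ahalf p μ) =
      ι p (qnat p (p ^ (1 + padicValNat p (2 * μ + 1))) * r) := by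
  obtain ⟨u₁, hu₁⟩ := Cq_add_associated_of_lt (half_add_eq_mul_half p hp) ha1 (by omega) μ
  obtain ⟨u₂, hu₂⟩ := Cq_add_associated_of_le (one_add_eq_mul_one p) (by omega) ha2 μ
  obtain ⟨s, hs⟩ := qnat_dvd_qnum_mul_half_add p hp μ
  have hφ_half :=
    ι_ne_zero p (frobenius_ne_zero p (Cq_ne_zero p (half_add_natCast_ne_zero p hp) μ))
  have hφ_one := ι_ne_zero p (frobenius_ne_zero p (Cq_ne_zero p (one_add_natCast_ne_zero p) μ))
  have hqnat := ι_ne_zero p (pow_ne_zero μ (qnat_ne_zero p (Fact.out : p.Prime).ne_zero))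
  have hunit := ι_ne_zero p u₂.ne_zero
  refine ⟨s * u₁ * ↑u₂⁻¹, ?_⟩
  rw [show a + μ * p = p * μ + a by ring, Ahalf, Ahalf,
    phiQ_div p _ (Cq_ne_zero p (one_add_natCast_ne_zero p) μ), ← hu₁, ← hu₂, hs]
  simp only [map_mul, map_units_inv] at hqnat hunit ⊢
  field_simp

end QDwork
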